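/- arXiv:1002.0518 — 3 statements merged into one kernel-verified Lean document; each statement's English description precedes it below -/
import Mathlib

section
/- Let G be an abelian group, k a field, Φ: G³ → kˣ, R: G² → kˣ satisfying R(f,gh) = R(f,g)R(f,h)·Φ(g,f,h)/(Φ(g,h,f)Φ(f,g,h)) and R(fg,h) = R(f,h)R(g,h)·Φ(h,f,g)Φ(f,g,h)/Φ(f,h,g) for all f,g,h ∈ G. Then for all f,g,h ∈ G: R(f,gh)·R(gh,f) = R(f,g)·R(g,f)·R(f,h)·R(h,f). -/
/-! The associator factor of (3.3) for `R(f, gh)` is `c = Φ(g,f,h) / (Φ(g,h,f) Φ(f,g,h))`, and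
(3.4) for `R(gh, f)` involves the same three values of `Φ`, with factor exactly `c⁻¹`. So in the
product `R(f,gh) R(gh,f)` every `Φ` cancels, which only needs the values to commute. -/

def doubleBraiding {G M : Type*} [Mul M] (R : G → G → M) (g h : G) : M :=
  R g h * R h g

theorem doubleBraiding_mul_right {G M : Type*} [Mul G] [CommGroup M]
    (Φ : G → G → G → M) (R : G → G → M)
    (h33 : ∀ f g h : G, R f (g * h) = R f g * R f h * Φ g f h / (Φ g h f * Φ f g h))
    (h34 : ∀ f g h : G, R (f * g) h = R f h * R g h * Φ h f g * Φ f g h / Φ f h g)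
    (f g h : G) :
    doubleBraiding R f (g * h) = doubleBraiding R f g * doubleBraiding R f h := by
  set c := Φ g f h / (Φ g h f * Φ f g h)
  have hleft : R f (g * h) = R f g * R f h * c := by rw [h33, mul_div_assoc]
  have hright : R (g * h) f = R g f * R h f * c⁻¹ := by
    rw [h34, inv_div, mul_assoc _ (Φ f g h), mul_comm (Φ f g h), mul_div_assoc]
  simp only [doubleBraiding, hleft, hright]
  rw [mul_mul_mul_comm, mul_inv_cancel, mul_one, mul_mul_mul_comm]

/-- The associator factors cancel: from (3.3) and (3.4) it follows that
`B(g,h) := R(g,h)R(h,g)` is multiplicative in the second variable. -/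
theorem stmt_4 (k : Type*) [Field k] (G : Type*) [CommGroup G]
    (Φ : G → G → G → kˣ) (R : G → G → kˣ)
    (h33 : ∀ f g h : G,
      R f (g * h) = R f g * R f h * Φ g f h / (Φ g h f * Φ f g h))
    (h34 : ∀ f g h : G,
      R (f * g) h = R f h * R g h * Φ h f g * Φ f g h / Φ f h g) :
    ∀ f g h : G,
      R f (g * h) * R (g * h) f = R f g * R g f * (R f h * R h f) :=
  doubleBraiding_mul_right Φ R h33 h34
end

section
/- Let n > 1, q ∈ ℂ a primitive n-th root of unity, 0 ≤ s ≤ n-1, and Φ_s the 3-cocycle on ℤ/n given by Φ_s(i,j,k) = q^{s·i·(j+k-(j+k) mod n)/n}. Suppose R: ℤ/n × ℤ/n → ℂˣ satisfies R(g, a+b) = R(g,a)·R(g,b)·Φ_s(a,g,b)/(Φ_s(a,b,g)·Φ_s(g,a,b)) for all g,a,b, and R(g,g)² = 1 where g is a generator of ℤ/n. Then s = 0. -/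
/-!
Since `Φ_s(i,j,k)` is symmetric in `j, k`, two of the three associators in the quasi-bicharacter
identity cancel, leaving `R(g, a+b) Φ_s(g,a,b) = R(g,a) R(g,b)`. For `g = 1` the associator
`Φ_s(1,a,b) = q^{s·carry(a,b)}` is trivial unless `a + b` wraps around, so `R(1,m) = R(1,1)^m`
for `m < n`, and the single wrap-around `(n-1) + 1 = 0` gives `q^s = R(1,1)^n = ±1`.
Because `q` has order `n`, `q^s = -1` forces `n` to be even, but then `R(1,1)^n = 1`;
hence `q^s = 1` and `n ∣ s`.
-/

/-- The 3-cochain `Φ_s(i,j,k) = q^{s·i·(j+k-(j+k)')/n}` on `ℤ/n`. -/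
def PhiCyclic (n s : ℕ) (q : ℂ) (i j k : ZMod n) : ℂ :=
  q ^ (s * i.val * ((j.val + k.val - (j.val + k.val) % n) / n))

theorem IsPrimitiveRoot.dvd_of_pow_eq_pow_of_sq_eq_one {M : Type*} [CommMonoid M] {q c : M}
    {n s : ℕ} (hq : IsPrimitiveRoot q n) (hc : c ^ 2 = 1) (h : q ^ s = c ^ n) : n ∣ s := by
  rcases Nat.even_or_odd n with ⟨k, rfl⟩ | hodd
  · refine hq.dvd_of_pow_eq_one s ?_
    rw [h, ← two_mul, pow_mul, hc, one_pow]
  · refine hodd.coprime_two_right.dvd_of_dvd_mul_right (hq.dvd_of_pow_eq_one _ ?_)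
    rw [pow_mul, h, ← pow_mul, mul_comm, pow_mul, hc, one_pow]

section PhiCyclic

variable {n s : ℕ} {q : ℂ}

theorem PhiCyclic_eq_pow_div (i j k : ZMod n) :
    PhiCyclic n s q i j k = q ^ (s * i.val * ((j.val + k.val) / n)) := by
  rw [PhiCyclic, ← Nat.div_eq_sub_mod_div]

theorem PhiCyclic_comm (i j k : ZMod n) : PhiCyclic n s q i j k = PhiCyclic n s q i k j := by
  rw [PhiCyclic, PhiCyclic, add_comm j.val]

theorem PhiCyclic_ne_zero (hq : q ≠ 0) (i j k : ZMod n) : PhiCyclic n s q i j k ≠ 0 :=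
  pow_ne_zero _ hq

theorem PhiCyclic_of_val_add_lt {i j k : ZMod n} (h : j.val + k.val < n) :
    PhiCyclic n s q i j k = 1 := by
  rw [PhiCyclic_eq_pow_div, Nat.div_eq_of_lt h, mul_zero, pow_zero]

end PhiCyclic

section QuasiBicharacter

variable {n s : ℕ} {q : ℂ} {R : ZMod n → ZMod n → ℂ}

theorem mul_PhiCyclic_of_quasiBicharacter (hq : q ≠ 0)
    (h33 : ∀ g a b : ZMod n,
      R g (a + b) = R g a * R g b * PhiCyclic n s q a g b /
        (PhiCyclic n s q a b g * PhiCyclic n s q g a b))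
    (g a b : ZMod n) : R g (a + b) * PhiCyclic n s q g a b = R g a * R g b := by
  rw [h33, PhiCyclic_comm a g b, mul_comm (PhiCyclic n s q a b g),
    mul_div_mul_right _ _ (PhiCyclic_ne_zero hq a b g),
    div_mul_cancel₀ _ (PhiCyclic_ne_zero hq g a b)]

variable (hn : 1 < n)
  (hmul : ∀ g a b : ZMod n, R g (a + b) * PhiCyclic n s q g a b = R g a * R g b)
include hn hmul

theorem apply_one_natCast_eq_pow (hR11 : R 1 1 ≠ 0) {m : ℕ} (hm : m < n) :
    R 1 (m : ZMod n) = R 1 1 ^ m := by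
  have : Fact (1 < n) := ⟨hn⟩
  induction m with
  | zero =>
    have h := hmul 1 0 1
    rw [zero_add, PhiCyclic_of_val_add_lt (by rwa [ZMod.val_zero, zero_add, ZMod.val_one]),
      mul_one, eq_comm, mul_eq_right₀ hR11] at h
    simpa using h
  | succ m ih =>
    have h := hmul 1 m 1
    rw [PhiCyclic_of_val_add_lt (by rwa [ZMod.val_cast_of_lt (by omega), ZMod.val_one]),
      mul_one, ih (by omega)] at h
    rw [Nat.cast_succ, h, pow_succ]

theorem pow_eq_apply_one_one_pow (hR11 : R 1 1 ≠ 0) : q ^ s = R 1 1 ^ n := by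
  have : Fact (1 < n) := ⟨hn⟩
  have hR0 : R 1 0 = 1 := by
    simpa using apply_one_natCast_eq_pow hn hmul hR11 (m := 0) (by omega)
  have hwrap : ((n - 1 : ℕ) : ZMod n) + 1 = 0 := by
    rw [← Nat.cast_add_one, Nat.sub_add_cancel hn.le, ZMod.natCast_self]
  have h := hmul 1 ((n - 1 : ℕ) : ZMod n) 1
  rwa [hwrap, hR0, one_mul, PhiCyclic_eq_pow_div, ZMod.val_cast_of_lt (by omega), ZMod.val_one,
    Nat.sub_add_cancel hn.le, Nat.div_self (by omega), mul_one, mul_one,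
    apply_one_natCast_eq_pow hn hmul hR11 (by omega), ← pow_succ, Nat.sub_add_cancel hn.le] at h

end QuasiBicharacter

theorem stmt_6_general (n : ℕ) (hn : 1 < n) (q : ℂ) (hq : IsPrimitiveRoot q n)
    (s : ℕ) (hs : s ≤ n - 1) (R : ZMod n → ZMod n → ℂ)
    (h33 : ∀ g a b : ZMod n,
      R g (a + b) = R g a * R g b * PhiCyclic n s q a g b /
        (PhiCyclic n s q a b g * PhiCyclic n s q g a b))
    (hsq : R 1 1 ^ 2 = 1) :
    s = 0 := by
  have hq0 : q ≠ 0 := hq.ne_zero (by omega)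
  have hR : R 1 1 ≠ 0 := by rintro h; simp [h] at hsq
  have hqs := pow_eq_apply_one_one_pow hn (mul_PhiCyclic_of_quasiBicharacter hq0 h33) hR
  exact Nat.eq_zero_of_dvd_of_lt (hq.dvd_of_pow_eq_pow_of_sq_eq_one hsq hqs) (by omega)

/-- If a nowhere-zero `R` satisfies the quasi-bicharacter identity (3.3) with
associator `Φ_s` and `R(g,g)² = 1` for the generator `g = 1`, then `s = 0`. -/
theorem stmt_6 (n : ℕ) (hn : 1 < n) (q : ℂ) (hq : IsPrimitiveRoot q n)
    (s : ℕ) (hs : s ≤ n - 1) (R : ZMod n → ZMod n → ℂ)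
    (hR0 : ∀ a b : ZMod n, R a b ≠ 0)
    (h33 : ∀ g a b : ZMod n,
      R g (a + b) = R g a * R g b * PhiCyclic n s q a g b /
        (PhiCyclic n s q a b g * PhiCyclic n s q g a b))
    (hsq : R 1 1 ^ 2 = 1) :
    s = 0 :=
  stmt_6_general n hn q hq s hs R h33 hsq
end

section
/- Let G be an abelian group, k a field, Φ: G³ → kˣ a normalized 3-cocycle, and R: G² → kˣ satisfying identities (3.3) and (3.4). Define B(g,h) := R(g,h)·R(h,g). Then B is a symmetric bicharacter on G: B(g,h) = B(h,g), B(f, gh) = B(f,g)·B(f,h), and B(fg, h) = B(f,h)·B(g,h) for all f,g,h ∈ G. -/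
/-! The Φ-factors in (3.3) for `R f (g * h)` are exactly inverse to those in (3.4) for
`R (g * h) f`, so they cancel in the monodromy `R f (g * h) * R (g * h) f`; multiplicativity
in the first argument then follows by symmetry of the monodromy. -/

theorem hexagon_monodromy_mul_right {G M : Type*} [Mul G] [CommGroup M]
    {Φ : G → G → G → M} {R : G → G → M}
    (h33 : ∀ f g h : G, R f (g * h) = R f g * R f h * Φ g f h / (Φ g h f * Φ f g h))
    (h34 : ∀ f g h : G, R (f * g) h = R f h * R g h * Φ h f g * Φ f g h / Φ f h g)
    (f g h : G) :
    R f (g * h) * R (g * h) f = (R f g * R g f) * (R f h * R h f) := by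
  rw [h33, h34, div_mul_div_comm, div_eq_iff_eq_mul]
  ac_rfl

theorem stmt_14_general (k : Type*) [Field k] (G : Type*) [CommGroup G]
    (Φ : G → G → G → kˣ) (R : G → G → kˣ)
    (h33 : ∀ f g h : G,
      R f (g * h) = R f g * R f h * Φ g f h / (Φ g h f * Φ f g h))
    (h34 : ∀ f g h : G,
      R (f * g) h = R f h * R g h * Φ h f g * Φ f g h / Φ f h g) :
    (∀ g h : G, R g h * R h g = R h g * R g h) ∧
    (∀ f g h : G, R f (g * h) * R (g * h) f = (R f g * R g f) * (R f h * R h f)) ∧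
    (∀ f g h : G, R (f * g) h * R h (f * g) = (R f h * R h f) * (R g h * R h g)) := by
  have hmul := hexagon_monodromy_mul_right h33 h34
  refine ⟨fun g h => mul_comm _ _, hmul, fun f g h => ?_⟩
  rw [mul_comm, hmul, mul_comm (R h f), mul_comm (R h g)]

/-- If `Φ` is a normalized 3-cocycle and `R` satisfies (3.3) and (3.4), then
`B(g,h) := R(g,h)·R(h,g)` is a symmetric bicharacter on `G`. -/
theorem stmt_14 (k : Type*) [Field k] (G : Type*) [CommGroup G]
    (Φ : G → G → G → kˣ) (R : G → G → kˣ)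
    (hcoc : ∀ a b c d : G, Φ b c d * Φ a (b * c) d * Φ a b c = Φ (a * b) c d * Φ a b (c * d))
    (hnorm1 : ∀ y z : G, Φ 1 y z = 1)
    (hnorm2 : ∀ x z : G, Φ x 1 z = 1)
    (hnorm3 : ∀ x y : G, Φ x y 1 = 1)
    (h33 : ∀ f g h : G,
      R f (g * h) = R f g * R f h * Φ g f h / (Φ g h f * Φ f g h))
    (h34 : ∀ f g h : G,
      R (f * g) h = R f h * R g h * Φ h f g * Φ f g h / Φ f h g) :
    (∀ g h : G, R g h * R h g = R h g * R g h) ∧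
    (∀ f g h : G, R f (g * h) * R (g * h) f = (R f g * R g f) * (R f h * R h f)) ∧
    (∀ f g h : G, R (f * g) h * R h (f * g) = (R f h * R h f) * (R g h * R h g)) :=
  stmt_14_general k G Φ R h33 h34
end
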